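/- arXiv:2510.25685 — 6 statements merged into one kernel-verified Lean document; each statement's English description precedes it below -/
import Mathlib

section
/- For every x ∈ [0,1], one has e^x / (1+x)^(1+x) ≤ e^{−x²/10}. -/
/-! Since `(1 + x) ^ (1 + x) = exp ((1 + x) log (1 + x))`, the claim is
`x + x² / 10 ≤ (1 + x) log (1 + x)`. The Padé-type bound `log (1 + x) ≥ 2x / (x + 2)` reduces this,
after clearing the denominator, to `x² (8 - x) ≥ 0`. -/

open Real

lemma add_sq_div_ten_le_mul_log_one_add {x : ℝ} (h0 : 0 ≤ x) (h8 : x ≤ 8) :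
    x + x ^ 2 / 10 ≤ (1 + x) * log (1 + x) :=
  calc x + x ^ 2 / 10 ≤ (1 + x) * (2 * x / (x + 2)) := by
        rw [mul_div_assoc', le_div_iff₀ (by linarith)]
        nlinarith [mul_nonneg (mul_nonneg h0 h0) (sub_nonneg.2 h8)]
    _ ≤ (1 + x) * log (1 + x) :=
        mul_le_mul_of_nonneg_left (le_log_one_add_of_nonneg h0) (by linarith)

lemma exp_div_one_add_rpow_eq {x : ℝ} (hx : 0 ≤ x) :
    exp x / (1 + x) ^ (1 + x) = exp (x - (1 + x) * log (1 + x)) := by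
  rw [rpow_def_of_pos (by linarith), exp_sub, mul_comm]

theorem exp_div_pow_le {x : ℝ} (hx : x ∈ Set.Icc (0 : ℝ) 1) :
    Real.exp x / (1 + x) ^ (1 + x) ≤ Real.exp (-(x ^ 2) / 10) := by
  obtain ⟨h0, h1⟩ := hx
  rw [exp_div_one_add_rpow_eq h0, exp_le_exp]
  linarith [add_sq_div_ten_le_mul_log_one_add h0 (by linarith)]
end

section
/- Let x₁, x₂ ∈ ℝ^n with ‖x₁ − x₂‖ = d. Then vol(B_r^n(x₁) \ B_r^n(x₂)) ≤ d · vol(B_r^{n−1}), where B_r^n(x) is the closed ball of radius r about x. -/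
/-!
After an isometry we may take `x₁ = (0, 0)` and `x₂ = (d, 0)` in `ℝ × ℝⁿ⁻¹`. The line
through `(0, p)` parallel to the first axis misses both balls when `‖p‖ > r`, and otherwise
meets them in two intervals of equal length whose centres are `d` apart, so their difference
has length at most `d`. Integrating over `p ∈ B_r^{n-1}` (Fubini) gives the bound.
-/

open MeasureTheory Metric Set EuclideanSpace

theorem Real.volume_closedBall_sdiff_closedBall_le (a b s : ℝ) :
    volume (closedBall a s \ closedBall b s) ≤ ENNReal.ofReal (dist a b) := by
  simp only [Real.closedBall_eq_Icc]
  rcases le_total a b with hab | hba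
  · calc volume (Icc (a - s) (a + s) \ Icc (b - s) (b + s))
        ≤ volume (Ico (a - s) (b - s)) := by
          refine measure_mono fun t ⟨⟨ht₁, _⟩, ht⟩ => ⟨ht₁, ?_⟩
          by_contra! h
          exact ht ⟨h, by linarith⟩
      _ = ENNReal.ofReal (dist a b) := by
          rw [Real.volume_Ico, Real.dist_eq, abs_of_nonpos (by linarith)]; ring_nf
  · calc volume (Icc (a - s) (a + s) \ Icc (b - s) (b + s))
        ≤ volume (Ioc (b + s) (a + s)) := by
          refine measure_mono fun t ⟨⟨_, ht₂⟩, ht⟩ => ⟨?_, ht₂⟩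
          by_contra! h
          exact ht ⟨by linarith, h⟩
      _ = ENNReal.ofReal (dist a b) := by
          rw [Real.volume_Ioc, Real.dist_eq, abs_of_nonneg (by linarith)]; ring_nf

theorem volume_closedBall_sdiff_closedBall_eq_of_dist_eq {E : Type*} [NormedAddCommGroup E]
    [InnerProductSpace ℝ E] [FiniteDimensional ℝ E] [MeasurableSpace E] [BorelSpace E]
    {x₁ x₂ y₁ y₂ : E} (h : dist x₁ x₂ = dist y₁ y₂) (r : ℝ) :
    volume (closedBall x₁ r \ closedBall x₂ r)
      = volume (closedBall y₁ r \ closedBall y₂ r) := by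
  set R := Submodule.reflection (ℝ ∙ ((y₂ - y₁) - (x₂ - x₁)))ᗮ
  have hR : R (y₂ - y₁) = x₂ - x₁ := by
    refine Submodule.reflection_sub ?_
    rw [← dist_eq_norm, ← dist_eq_norm, dist_comm, ← h, dist_comm]
  let f : E ≃ᵢ E :=
    (IsometryEquiv.subRight y₁).trans (R.toIsometryEquiv.trans (IsometryEquiv.addRight x₁))
  have hf : MeasurePreserving f := (measurePreserving_add_right volume x₁).comp
    (R.measurePreserving.comp (measurePreserving_sub_right volume y₁))
  have hf₁ : f y₁ = x₁ := by simp [f]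
  have hf₂ : f y₂ = x₂ := by simp [f, hR]
  rw [← hf.measure_preimage
      (measurableSet_closedBall.diff measurableSet_closedBall).nullMeasurableSet,
    preimage_sdiff, f.preimage_closedBall, f.preimage_closedBall, ← hf₁, ← hf₂,
    f.symm_apply_apply, f.symm_apply_apply]

namespace EuclideanSpace

def finSuccProdEquiv (m : ℕ) :
    EuclideanSpace ℝ (Fin (m + 1)) ≃ᵐ ℝ × EuclideanSpace ℝ (Fin m) :=
  (MeasurableEquiv.toLp 2 (Fin (m + 1) → ℝ)).symm.trans
    ((MeasurableEquiv.piFinSuccAbove (fun _ => ℝ) 0).trans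
      ((MeasurableEquiv.refl ℝ).prodCongr (MeasurableEquiv.toLp 2 (Fin m → ℝ))))

theorem measurePreserving_finSuccProdEquiv (m : ℕ) :
    MeasurePreserving (finSuccProdEquiv m) :=
  (volume_preserving_symm_measurableEquiv_toLp _).trans <|
    (volume_preserving_piFinSuccAbove (fun _ => ℝ) 0).trans <|
      (MeasurePreserving.id volume).prod (PiLp.volume_preserving_toLp (Fin m))

variable {m : ℕ}

theorem finSuccProdEquiv_symm_apply (t : ℝ) (p : EuclideanSpace ℝ (Fin m)) :
    (finSuccProdEquiv m).symm (t, p) = WithLp.toLp 2 (Fin.cons t p.ofLp) := by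
  ext i
  refine Fin.cases ?_ (fun i => ?_) i <;> rfl

theorem dist_finSuccProdEquiv_symm_sq (t c : ℝ) (p q : EuclideanSpace ℝ (Fin m)) :
    dist ((finSuccProdEquiv m).symm (t, p)) ((finSuccProdEquiv m).symm (c, q)) ^ 2
      = dist t c ^ 2 + dist p q ^ 2 := by
  simp only [EuclideanSpace.dist_eq, finSuccProdEquiv_symm_apply, Fin.sum_univ_succ,
    Fin.cons_zero, Fin.cons_succ]
  rw [Real.sq_sqrt (by positivity), Real.sq_sqrt (by positivity)]

theorem dist_finSuccProdEquiv_symm_of_snd_eq (t c : ℝ) (p : EuclideanSpace ℝ (Fin m)) :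
    dist ((finSuccProdEquiv m).symm (t, p)) ((finSuccProdEquiv m).symm (c, p)) = dist t c := by
  rw [← sq_eq_sq₀ dist_nonneg dist_nonneg, dist_finSuccProdEquiv_symm_sq, dist_self]
  ring

theorem preimage_finSuccProdEquiv_symm_closedBall_of_le {p q : EuclideanSpace ℝ (Fin m)}
    {r : ℝ} (h : dist p q ≤ r) (c : ℝ) :
    (fun t => (finSuccProdEquiv m).symm (t, p)) ⁻¹'
        closedBall ((finSuccProdEquiv m).symm (c, q)) r
      = closedBall c √(r ^ 2 - dist p q ^ 2) := by
  have hr : 0 ≤ r := dist_nonneg.trans h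
  ext t
  rw [mem_preimage, mem_closedBall, mem_closedBall, ← sq_le_sq₀ dist_nonneg hr,
    dist_finSuccProdEquiv_symm_sq,
    Real.le_sqrt dist_nonneg (sub_nonneg.2 (pow_le_pow_left₀ dist_nonneg h 2)), le_sub_iff_add_le]

theorem preimage_finSuccProdEquiv_symm_closedBall_of_lt {p q : EuclideanSpace ℝ (Fin m)}
    {r : ℝ} (h : r < dist p q) (c : ℝ) :
    (fun t => (finSuccProdEquiv m).symm (t, p)) ⁻¹'
        closedBall ((finSuccProdEquiv m).symm (c, q)) r
      = ∅ := by
  refine eq_empty_of_forall_notMem fun t ht => h.not_ge (ht.trans' ?_)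
  refine (sq_le_sq₀ dist_nonneg dist_nonneg).1 ?_
  rw [dist_finSuccProdEquiv_symm_sq]
  exact le_add_of_nonneg_left (sq_nonneg _)

theorem volume_closedBall_sdiff_closedBall_finSuccProdEquiv_symm_le (a b : ℝ)
    (q : EuclideanSpace ℝ (Fin m)) (r : ℝ) :
    volume (closedBall ((finSuccProdEquiv m).symm (a, q)) r \
        closedBall ((finSuccProdEquiv m).symm (b, q)) r)
      ≤ ENNReal.ofReal (dist a b) * volume (closedBall q r) := by
  set S := closedBall ((finSuccProdEquiv m).symm (a, q)) r \
    closedBall ((finSuccProdEquiv m).symm (b, q)) r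
  have hS : MeasurableSet ((finSuccProdEquiv m).symm ⁻¹' S) :=
    (finSuccProdEquiv m).symm.measurable (measurableSet_closedBall.diff measurableSet_closedBall)
  have slice (p : EuclideanSpace ℝ (Fin m)) :
      volume ((fun t => (t, p)) ⁻¹' ((finSuccProdEquiv m).symm ⁻¹' S))
        ≤ (closedBall q r).indicator (fun _ => ENNReal.ofReal (dist a b)) p := by
    rw [preimage_preimage, preimage_sdiff]
    rcases le_or_gt (dist p q) r with h | h
    · rw [indicator_of_mem (mem_closedBall.2 h), preimage_finSuccProdEquiv_symm_closedBall_of_le h,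
        preimage_finSuccProdEquiv_symm_closedBall_of_le h]
      exact Real.volume_closedBall_sdiff_closedBall_le a b _
    · rw [preimage_finSuccProdEquiv_symm_closedBall_of_lt h, empty_sdiff, measure_empty]
      exact bot_le
  calc volume S = volume ((finSuccProdEquiv m).symm ⁻¹' S) :=
        ((measurePreserving_finSuccProdEquiv m).symm.measure_preimage_equiv S).symm
    _ = ∫⁻ p, volume ((fun t => (t, p)) ⁻¹' ((finSuccProdEquiv m).symm ⁻¹' S)) := by
        rw [Measure.volume_eq_prod, Measure.prod_apply_symm hS]
    _ ≤ ∫⁻ p, (closedBall q r).indicator (fun _ => ENNReal.ofReal (dist a b)) p :=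
        lintegral_mono slice
    _ = ENNReal.ofReal (dist a b) * volume (closedBall q r) :=
        lintegral_indicator_const measurableSet_closedBall _

end EuclideanSpace

theorem ball_diff_volume_le_general (n : ℕ) (r : ℝ) (d : ℝ)
    (x₁ x₂ : EuclideanSpace ℝ (Fin n)) (hd : dist x₁ x₂ = d) :
    (volume (Metric.closedBall x₁ r \ Metric.closedBall x₂ r)).toReal
      ≤ d * (volume (Metric.closedBall (0 : EuclideanSpace ℝ (Fin (n - 1))) r)).toReal := by
  cases n with
  | zero => simp [← hd, Subsingleton.elim x₁ x₂]
  | succ m =>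
    have hd₀ : 0 ≤ d := hd ▸ dist_nonneg
    have hd' : dist 0 d = d := by rw [Real.dist_eq, zero_sub, abs_neg, abs_of_nonneg hd₀]
    have hdist : dist x₁ x₂
        = dist ((finSuccProdEquiv m).symm (0, 0)) ((finSuccProdEquiv m).symm (d, 0)) := by
      rw [dist_finSuccProdEquiv_symm_of_snd_eq, hd', hd]
    have hbound := volume_closedBall_sdiff_closedBall_finSuccProdEquiv_symm_le 0 d
      (0 : EuclideanSpace ℝ (Fin m)) r
    rw [hd'] at hbound
    rw [volume_closedBall_sdiff_closedBall_eq_of_dist_eq hdist]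
    refine (ENNReal.toReal_mono
      (ENNReal.mul_ne_top ENNReal.ofReal_ne_top measure_closedBall_lt_top.ne) hbound).trans_eq ?_
    rw [ENNReal.toReal_mul, ENNReal.toReal_ofReal hd₀]

theorem ball_diff_volume_le (n : ℕ) (hn : 1 ≤ n) (r : ℝ) (hr : 0 ≤ r) (d : ℝ)
    (x₁ x₂ : EuclideanSpace ℝ (Fin n)) (hd : dist x₁ x₂ = d) :
    (volume (Metric.closedBall x₁ r \ Metric.closedBall x₂ r)).toReal
      ≤ d * (volume (Metric.closedBall (0 : EuclideanSpace ℝ (Fin (n - 1))) r)).toReal :=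
  ball_diff_volume_le_general n r d x₁ x₂ hd
end

section
/- Fix δ > 0. If x₁, x₂ ∈ ℝ^n satisfy ‖x₁ − x₂‖ ≤ r·n^{−1/2−δ}, then vol(B_r^n(x₁) \ B_r^n(x₂)) ≤ ((1+o(1))/√(2π)) · n^{−δ} · vol(B_r^n) as n → ∞. -/
open MeasureTheory Filter Real Metric Set Module

/-!
Translation by `x₂ - x₁` carries `B(x₁, r)` onto `B(x₂, r)`. Cutting both balls by hyperplanes
orthogonal to `x₂ - x₁` shows that `B(x₁, r) \ B(x₂, r)` has the same volume as the slab of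
`B(x₁, r)` of width `d = ‖x₂ - x₁‖` centred at `x₁`, and that slab lies in an interval of length
`d` times an `(n - 1)`-ball of radius `r`. So the volume is at most `d ω_{n-1} r^{n-1}`, and
`√(2π) ω_{n-1} / (√n ω_n) = √(n/2) Γ(n/2) / Γ(n/2 + 1/2)`, which tends to `1` by Gautschi's
inequality, itself a consequence of the log-convexity of `Γ`.
-/

namespace Real

theorem Gamma_add_half_sq_le {x : ℝ} (hx : 0 < x) :
    Gamma (x + 1 / 2) ^ 2 ≤ Gamma x * Gamma (x + 1) := by
  have h := Gamma_mul_add_mul_le_rpow_Gamma_mul_rpow_Gamma hx (by linarith : 0 < x + 1)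
    one_half_pos one_half_pos (by norm_num)
  rw [← sqrt_eq_rpow, ← sqrt_eq_rpow, ← sqrt_mul (Gamma_pos_of_pos hx).le,
    show 1 / 2 * x + 1 / 2 * (x + 1) = x + 1 / 2 by ring] at h
  calc Gamma (x + 1 / 2) ^ 2 ≤ √(Gamma x * Gamma (x + 1)) ^ 2 :=
        pow_le_pow_left₀ (Gamma_pos_of_pos (by linarith)).le h 2
    _ = Gamma x * Gamma (x + 1) :=
        sq_sqrt (mul_pos (Gamma_pos_of_pos hx) (Gamma_pos_of_pos (by linarith))).le

theorem Gamma_add_half_le_sqrt_mul_Gamma {x : ℝ} (hx : 0 < x) :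
    Gamma (x + 1 / 2) ≤ √x * Gamma x := by
  have h := Gamma_add_half_sq_le hx
  rw [Gamma_add_one hx.ne'] at h
  rw [← pow_le_pow_iff_left₀ (Gamma_pos_of_pos (by linarith)).le
    (mul_pos (sqrt_pos.2 hx) (Gamma_pos_of_pos hx)).le two_ne_zero, mul_pow, sq_sqrt hx.le]
  linarith

theorem mul_Gamma_le_sqrt_mul_Gamma_add_half {x : ℝ} (hx : 0 < x) :
    x * Gamma x ≤ √(x + 1 / 2) * Gamma (x + 1 / 2) := by
  have hx' : 0 < x + 1 / 2 := by linarith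
  have h := Gamma_add_half_sq_le hx'
  rw [add_assoc, show (1 / 2 + 1 / 2 : ℝ) = 1 by norm_num, Gamma_add_one hx.ne',
    Gamma_add_one hx'.ne'] at h
  rw [← pow_le_pow_iff_left₀ (mul_pos hx (Gamma_pos_of_pos hx)).le
    (mul_pos (sqrt_pos.2 hx') (Gamma_pos_of_pos hx')).le two_ne_zero, mul_pow, mul_pow,
    sq_sqrt hx'.le]
  linarith

theorem tendsto_sqrt_mul_Gamma_div_Gamma_add_half :
    Tendsto (fun x ↦ √x * Gamma x / Gamma (x + 1 / 2)) atTop (nhds 1) := by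
  have upper : Tendsto (fun x : ℝ ↦ √(1 + (2 * x)⁻¹)) atTop (nhds 1) := by
    have := ((tendsto_inv_atTop_zero.comp (tendsto_id.const_mul_atTop two_pos)).const_add 1).sqrt
    simpa using this
  refine tendsto_of_tendsto_of_tendsto_of_le_of_le' tendsto_const_nhds upper ?_ ?_
  · filter_upwards [eventually_gt_atTop 0] with x hx
    rw [le_div_iff₀ (Gamma_pos_of_pos (by linarith)), one_mul]
    exact Gamma_add_half_le_sqrt_mul_Gamma hx
  · filter_upwards [eventually_gt_atTop 0] with x hx
    have hsx := sqrt_pos.2 hx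
    rw [div_le_iff₀ (Gamma_pos_of_pos (by linarith)),
      show 1 + (2 * x)⁻¹ = (x + 1 / 2) / x by field_simp, sqrt_div' _ hx.le,
      div_mul_eq_mul_div, le_div_iff₀ hsx, mul_right_comm, mul_self_sqrt hx.le]
    exact mul_Gamma_le_sqrt_mul_Gamma_add_half hx

end Real

noncomputable def unitBallVolume (n : ℕ) : ℝ := √π ^ n / Gamma (n / 2 + 1)

theorem unitBallVolume_pos (n : ℕ) : 0 < unitBallVolume n :=
  div_pos (pow_pos (sqrt_pos.2 pi_pos) n) (Gamma_pos_of_pos (by positivity))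

theorem EuclideanSpace.toReal_volume_closedBall_fin {n : ℕ} (x : EuclideanSpace ℝ (Fin n)) {r : ℝ}
    (hr : 0 ≤ r) : (volume (closedBall x r)).toReal = r ^ n * unitBallVolume n := by
  cases n with
  | zero =>
    rw [volume_euclideanSpace_eq_dirac, Measure.dirac_apply' _ measurableSet_closedBall,
      Subsingleton.elim 0 x, indicator_of_mem (mem_closedBall_self hr)]
    simp [unitBallVolume]
  | succ m =>
    rw [EuclideanSpace.volume_closedBall, Fintype.card_fin, ENNReal.toReal_mul,
      ENNReal.toReal_pow, ENNReal.toReal_ofReal hr]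
    exact congrArg (r ^ (m + 1) * ·) (ENNReal.toReal_ofReal (unitBallVolume_pos _).le)

theorem sqrt_two_pi_mul_unitBallVolume (m : ℕ) :
    √(2 * π) * unitBallVolume m = √(m + 1) *
      (√((m + 1) / 2) * Gamma ((m + 1) / 2) / Gamma ((m + 1) / 2 + 1 / 2)) *
        unitBallVolume (m + 1) := by
  set x : ℝ := (m + 1) / 2 with hx
  have hx0 : 0 < x := by positivity
  have h₁ : (m : ℝ) / 2 + 1 = x + 1 / 2 := by rw [hx]; ring
  have h₂ : ((m + 1 : ℕ) : ℝ) / 2 + 1 = x + 1 := by rw [hx]; push_cast; ring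
  have h₃ : √(m + 1) = √2 * √x := by rw [← sqrt_mul zero_le_two, hx]; ring_nf
  simp only [unitBallVolume, h₁, h₂, Gamma_add_one hx0.ne', sqrt_mul zero_le_two, h₃, pow_succ]
  have := Gamma_pos_of_pos hx0
  have := Gamma_pos_of_pos (by positivity : 0 < x + 1 / 2)
  have := sqrt_pos.2 hx0
  field_simp
  rw [sq_sqrt hx0.le]

theorem EuclideanSpace.norm_toLp_removeNth_le {n : ℕ} (g : Fin (n + 1) → ℝ) (i : Fin (n + 1)) :
    ‖WithLp.toLp 2 (Fin.removeNth i g)‖ ≤ ‖WithLp.toLp 2 g‖ := by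
  simp only [EuclideanSpace.norm_eq, Fin.sum_univ_succAbove _ i]
  exact sqrt_le_sqrt (le_add_of_nonneg_left (sq_nonneg _))

section Balls

variable {E : Type*} [NormedAddCommGroup E] [InnerProductSpace ℝ E]

theorem dist_sq_eq_dist_sq_sub_two_inner_add (x₁ x₂ y : E) :
    dist y x₂ ^ 2 = dist y x₁ ^ 2 - 2 * inner ℝ (x₂ - x₁) (y - x₁) + ‖x₂ - x₁‖ ^ 2 := by
  rw [dist_eq_norm, dist_eq_norm, ← sub_sub_sub_cancel_right y x₂ x₁, norm_sub_sq_real,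
    real_inner_comm]

theorem mem_closedBall_of_half_le_inner {x₁ x₂ y : E} {r : ℝ} (hy : y ∈ closedBall x₁ r)
    (h : ‖x₂ - x₁‖ ^ 2 / 2 ≤ inner ℝ (x₂ - x₁) (y - x₁)) : y ∈ closedBall x₂ r := by
  refine le_trans ?_ (mem_closedBall.1 hy)
  rw [← pow_le_pow_iff_left₀ dist_nonneg dist_nonneg two_ne_zero,
    dist_sq_eq_dist_sq_sub_two_inner_add x₁ x₂]
  linarith

theorem mem_closedBall_of_inner_le_half {x₁ x₂ y : E} {r : ℝ} (hy : y ∈ closedBall x₂ r)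
    (h : inner ℝ (x₂ - x₁) (y - x₁) ≤ ‖x₂ - x₁‖ ^ 2 / 2) : y ∈ closedBall x₁ r := by
  refine le_trans ?_ (mem_closedBall.1 hy)
  rw [← pow_le_pow_iff_left₀ dist_nonneg dist_nonneg two_ne_zero,
    dist_sq_eq_dist_sq_sub_two_inner_add x₁ x₂]
  linarith

variable [MeasurableSpace E] [BorelSpace E]

theorem measure_closedBall_diff_closedBall [ProperSpace E] (μ : Measure E)
    [μ.IsAddRightInvariant] [IsFiniteMeasureOnCompacts μ] (x₁ x₂ : E) (r : ℝ) :
    μ (closedBall x₁ r \ closedBall x₂ r) = μ (closedBall x₁ r ∩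
      {y | inner ℝ (x₂ - x₁) (y - x₁) ∈ Ico (-(‖x₂ - x₁‖ ^ 2 / 2)) (‖x₂ - x₁‖ ^ 2 / 2)}) := by
  set v := x₂ - x₁
  set h := ‖v‖ ^ 2 / 2
  set t : E → ℝ := fun y ↦ inner ℝ v (y - x₁)
  have ht : Continuous t := continuous_const.inner (continuous_id.sub continuous_const)
  have ht_sub (y : E) : t (y - v) = t y - 2 * h := by
    simp only [t, h, inner_sub_right, real_inner_self_eq_norm_sq]
    ring
  -- Below the bisecting hyperplane `t = h`, `B(x₂, r)` is the translate by `v` of the part of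
  -- `B(x₁, r)` below `t = -h`.
  set A := closedBall x₁ r ∩ t ⁻¹' Iio h
  set A' := closedBall x₂ r ∩ t ⁻¹' Iio h
  set S₀ := closedBall x₁ r ∩ t ⁻¹' Iio (-h)
  set S := closedBall x₁ r ∩ t ⁻¹' Ico (-h) h
  have hdiff : closedBall x₁ r \ closedBall x₂ r = A \ A' := by
    ext y
    simp only [A, A', Set.mem_sdiff, mem_inter_iff, mem_preimage, mem_Iio]
    refine ⟨fun ⟨h₁, h₂⟩ ↦ ⟨⟨h₁, ?_⟩, fun h₂' ↦ h₂ h₂'.1⟩, fun ⟨⟨h₁, hy⟩, h₂⟩ ↦ ⟨h₁, ?_⟩⟩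
    · by_contra! hy
      exact h₂ (mem_closedBall_of_half_le_inner h₁ hy)
    · exact fun h₂' ↦ h₂ ⟨h₂', hy⟩
  have hA'A : A' ⊆ A := fun y ⟨hy₂, hy⟩ ↦ ⟨mem_closedBall_of_inner_le_half hy₂ hy.le, hy⟩
  have hA' : A' = (· + -v) ⁻¹' S₀ := by
    ext y
    have hy : dist (y - v) x₁ = dist y x₂ := by rw [← dist_sub_right y x₂ v, sub_sub_cancel]
    simp only [A', S₀, mem_inter_iff, mem_preimage, mem_Iio, mem_closedBall, ← sub_eq_add_neg,
      ht_sub, hy]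
    constructor <;> rintro ⟨h₁, h₂⟩ <;> exact ⟨h₁, by linarith⟩
  have hA : A = S₀ ∪ S := by
    rw [← inter_union_distrib_left, ← preimage_union,
      Iio_union_Ico_eq_Iio (neg_le_self (by positivity))]
  have hS₀S : Disjoint S₀ S :=
    disjoint_left.2 fun y ⟨_, hy₀⟩ ⟨_, hy, _⟩ ↦ (not_lt.2 hy) hy₀
  have hS₀_fin : μ S₀ ≠ ⊤ :=
    ((measure_mono inter_subset_left).trans_lt measure_closedBall_lt_top).ne
  have hA'_fin : μ A' ≠ ⊤ :=
    ((measure_mono inter_subset_left).trans_lt measure_closedBall_lt_top).ne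
  have hS : MeasurableSet S :=
    measurableSet_closedBall.inter (measurableSet_Ico.preimage ht.measurable)
  have hA'_meas : MeasurableSet A' :=
    measurableSet_closedBall.inter (measurableSet_Iio.preimage ht.measurable)
  rw [hdiff, measure_sdiff hA'A hA'_meas.nullMeasurableSet hA'_fin, hA',
    measure_preimage_add_right, hA, measure_union hS₀S hS, ENNReal.add_sub_cancel_left hS₀_fin]
  rfl

variable [FiniteDimensional ℝ E]

theorem volume_closedBall_inter_inner_mem_le {n : ℕ} (hE : finrank ℝ E = n + 1) {u : E}
    (hu : ‖u‖ = 1) (x : E) (r : ℝ) (s : Set ℝ) :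
    volume (closedBall x r ∩ {y | inner ℝ u (y - x) ∈ s}) ≤
      volume s * volume (closedBall (0 : EuclideanSpace ℝ (Fin n)) r) := by
  obtain ⟨b, hb⟩ : ∃ b : OrthonormalBasis (Fin (n + 1)) ℝ E, ∀ i ∈ ({0} : Set (Fin (n + 1))),
      b i = u := by
    refine Orthonormal.exists_orthonormalBasis_extension_of_card_eq (by simp [hE]) ⟨?_, ?_⟩
    · simp [hu]
    · intro i j hij
      exact absurd (Subsingleton.elim i j) hij
  set P : E → ℝ × (Fin n → ℝ) := fun y ↦
    MeasurableEquiv.piFinSuccAbove (fun _ ↦ ℝ) 0 (WithLp.ofLp (b.repr (y - x)))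
  have hP : MeasurePreserving P volume volume :=
    (volume_preserving_piFinSuccAbove (fun _ ↦ ℝ) 0).comp
      ((PiLp.volume_preserving_ofLp _).comp
        (b.measurePreserving_repr.comp (measurePreserving_sub_right volume x)))
  have hsub : closedBall x r ∩ {y | inner ℝ u (y - x) ∈ s} ⊆
      P ⁻¹' (s ×ˢ (WithLp.toLp 2 ⁻¹' closedBall 0 r)) := by
    rintro y ⟨hy, hys⟩
    refine ⟨?_, ?_⟩
    · change b.repr (y - x) 0 ∈ s
      rwa [b.repr_apply_apply, hb 0 rfl]
    · change WithLp.toLp 2 (Fin.removeNth 0 (WithLp.ofLp (b.repr (y - x)))) ∈ closedBall 0 r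
      rw [mem_closedBall_zero_iff]
      refine (EuclideanSpace.norm_toLp_removeNth_le _ 0).trans ?_
      rwa [WithLp.toLp_ofLp, LinearIsometryEquiv.norm_map, ← dist_eq_norm]
  calc volume (closedBall x r ∩ {y | inner ℝ u (y - x) ∈ s})
      ≤ volume (s ×ˢ (WithLp.toLp 2 ⁻¹' closedBall 0 r)) :=
        (measure_mono hsub).trans (hP.measure_preimage_le _)
    _ = volume s * volume (closedBall (0 : EuclideanSpace ℝ (Fin n)) r) := by
        rw [Measure.volume_eq_prod, Measure.prod_prod,
          (PiLp.volume_preserving_toLp _).measure_preimage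
            measurableSet_closedBall.nullMeasurableSet]

theorem volume_closedBall_diff_closedBall_le {n : ℕ} (hE : finrank ℝ E = n + 1)
    (x₁ x₂ : E) (r : ℝ) :
    volume (closedBall x₁ r \ closedBall x₂ r) ≤
      ENNReal.ofReal (dist x₁ x₂) * volume (closedBall (0 : EuclideanSpace ℝ (Fin n)) r) := by
  rcases eq_or_ne x₁ x₂ with rfl | hne
  · simp
  set d := ‖x₂ - x₁‖
  have hd : 0 < d := norm_pos_iff.2 (sub_ne_zero.2 hne.symm)
  set u := d⁻¹ • (x₂ - x₁)
  have hu : ‖u‖ = 1 := norm_smul_inv_norm (sub_ne_zero.2 hne.symm)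
  have hslab : {y | inner ℝ (x₂ - x₁) (y - x₁) ∈ Ico (-(d ^ 2 / 2)) (d ^ 2 / 2)} =
      {y | inner ℝ u (y - x₁) ∈ Ico (-(d / 2)) (d / 2)} := by
    ext y
    have : inner ℝ (x₂ - x₁) (y - x₁) = d * inner ℝ u (y - x₁) := by
      rw [real_inner_smul_left, mul_inv_cancel_left₀ hd.ne']
    simp only [mem_ofPred_eq, mem_Ico, this]
    constructor <;> rintro ⟨h₁, h₂⟩ <;> constructor <;> nlinarith
  rw [measure_closedBall_diff_closedBall, hslab, dist_comm, dist_eq_norm]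
  convert volume_closedBall_inter_inner_mem_le hE hu x₁ r _ using 2
  rw [Real.volume_Ico]
  congr 1
  ring

end Balls

theorem ball_diff_volume_asymptotic_general (δ : ℝ) :
    ∃ f : ℕ → ℝ, Filter.Tendsto f Filter.atTop (nhds 0) ∧
      ∀ n : ℕ, ∀ r : ℝ, 0 ≤ r → ∀ x₁ x₂ : EuclideanSpace ℝ (Fin n),
        dist x₁ x₂ ≤ r * (n : ℝ) ^ (-(1 / 2 : ℝ) - δ) →
        (volume (Metric.closedBall x₁ r \ Metric.closedBall x₂ r)).toReal
          ≤ ((1 + f n) / Real.sqrt (2 * π)) * (n : ℝ) ^ (-δ)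
              * (volume (Metric.closedBall (0 : EuclideanSpace ℝ (Fin n)) r)).toReal := by
  refine ⟨fun n ↦ √(n / 2) * Gamma (n / 2) / Gamma (n / 2 + 1 / 2) - 1, ?_, ?_⟩
  · simpa using (tendsto_sqrt_mul_Gamma_div_Gamma_add_half.comp
      (tendsto_natCast_atTop_atTop.atTop_div_const two_pos)).sub_const 1
  rintro (_ | m) r hr x₁ x₂ hdist
  · simp [Subsingleton.elim x₁ x₂]
  have hn : (0 : ℝ) < m + 1 := by positivity
  have hdiff := volume_closedBall_diff_closedBall_le finrank_euclideanSpace_fin x₁ x₂ r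
  calc (volume (closedBall x₁ r \ closedBall x₂ r)).toReal
      ≤ dist x₁ x₂ * (r ^ m * unitBallVolume m) := by
        rw [← EuclideanSpace.toReal_volume_closedBall_fin 0 hr, ← ENNReal.toReal_ofReal dist_nonneg,
          ← ENNReal.toReal_mul]
        exact ENNReal.toReal_mono (ENNReal.mul_ne_top ENNReal.ofReal_ne_top
          measure_closedBall_lt_top.ne) hdiff
    _ ≤ r * ((m + 1 : ℕ) : ℝ) ^ (-(1 / 2 : ℝ) - δ) * (r ^ m * unitBallVolume m) := by
        have := unitBallVolume_pos m
        gcongr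
    _ = _ := by
        rw [EuclideanSpace.toReal_volume_closedBall_fin 0 hr, add_sub_cancel]
        push_cast
        rw [show -(1 / 2 : ℝ) - δ = -δ - 1 / 2 by ring, rpow_sub hn, ← sqrt_eq_rpow]
        have h2π : √(2 * π) ≠ 0 := (sqrt_pos.2 (by positivity)).ne'
        rw [(eq_div_iff h2π).2 ((mul_comm _ _).trans (sqrt_two_pi_mul_unitBallVolume m))]
        have := sqrt_pos.2 hn
        field_simp
        ring

theorem ball_diff_volume_asymptotic (δ : ℝ) (hδ : 0 < δ) :
    ∃ f : ℕ → ℝ, Filter.Tendsto f Filter.atTop (nhds 0) ∧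
      ∀ n : ℕ, ∀ r : ℝ, 0 ≤ r → ∀ x₁ x₂ : EuclideanSpace ℝ (Fin n),
        dist x₁ x₂ ≤ r * (n : ℝ) ^ (-(1 / 2 : ℝ) - δ) →
        (volume (Metric.closedBall x₁ r \ Metric.closedBall x₂ r)).toReal
          ≤ ((1 + f n) / Real.sqrt (2 * π)) * (n : ℝ) ^ (-δ)
              * (volume (Metric.closedBall (0 : EuclideanSpace ℝ (Fin n)) r)).toReal :=
  ball_diff_volume_asymptotic_general δ
end

section
/- The equation ln(2x/e) = 1/(2x) has a unique positive real root ξ, and ξ ∈ (1.795, 1.796). -/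
open Real

lemma Flt : Real.log 3.59 - 1/3.59 < 1 := by
  have hlow : (1.320948 : ℝ) ≤ Real.exp (1/3.59) := by
    have h := Real.sum_le_exp_of_nonneg (x := 1/3.59) (by norm_num) 4
    simp [Finset.sum_range_succ, Nat.factorial] at h
    nlinarith [h]
  have he := Real.exp_one_gt_d9
  have : Real.log 3.59 < 1 + 1/3.59 := by
    rw [Real.log_lt_iff_lt_exp (by norm_num), Real.exp_add]
    nlinarith [Real.exp_pos (1/3.59)]
  linarith

lemma Fgt : 1 < Real.log 3.592 - 1/3.592 := by
  have hup : Real.exp (1/3.592) ≤ (1.321012 : ℝ) := by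
    have h := Real.exp_bound' (x := 1/3.592) (by norm_num) (by norm_num) (n := 5) (by norm_num)
    simp [Finset.sum_range_succ, Nat.factorial] at h
    nlinarith [h]
  have he := Real.exp_one_lt_d9
  have : 1 + 1/3.592 < Real.log 3.592 := by
    rw [Real.lt_log_iff_exp_lt (by norm_num), Real.exp_add]
    nlinarith [Real.exp_pos (1/3.592)]
  linarith

lemma Fmono : StrictMonoOn (fun y : ℝ => Real.log y - 1/y) (Set.Ioi 0) := by
  intro a ha b hb hab
  simp only [Set.mem_Ioi] at ha hb
  have h1 : Real.log a < Real.log b := Real.log_lt_log ha hab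
  have h2 : 1/b < 1/a := by
    apply one_div_lt_one_div_of_lt ha hab
  simp only
  linarith

lemma root_iff {x : ℝ} (hx : 0 < x) :
    Real.log (2 * x / Real.exp 1) = 1 / (2 * x) ↔
      Real.log (2 * x) - 1 / (2 * x) = 1 := by
  rw [Real.log_div (by positivity) (Real.exp_ne_zero 1), Real.log_exp]
  constructor <;> intro h <;> linarith

theorem xi_unique_root :
    (∃! x : ℝ, 0 < x ∧ Real.log (2 * x / Real.exp 1) = 1 / (2 * x)) ∧
      ∀ x : ℝ, 0 < x → Real.log (2 * x / Real.exp 1) = 1 / (2 * x) →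
        x ∈ Set.Ioo (1.795 : ℝ) 1.796 := by
  set F : ℝ → ℝ := fun y => Real.log y - 1/y with hF
  have hbounds : ∀ x : ℝ, 0 < x → Real.log (2 * x / Real.exp 1) = 1 / (2 * x) →
      x ∈ Set.Ioo (1.795 : ℝ) 1.796 := by
    intro x hx hroot
    have h1 : F (2 * x) = 1 := (root_iff hx).mp hroot
    constructor
    · by_contra h
      push_neg at h
      have h2x : (2 : ℝ) * x ≤ 3.59 := by linarith
      have hle : F (2 * x) ≤ F 3.59 := by
        rcases eq_or_lt_of_le h2x with h' | h'
        · rw [h']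
        · exact le_of_lt (Fmono (by simpa using hx) (by norm_num) h')
      have hlt := Flt
      simp only [hF] at hle h1
      norm_num at hle h1 hlt
      linarith
    · by_contra h
      push_neg at h
      have h2x : (3.592 : ℝ) ≤ 2 * x := by linarith
      have hle : F 3.592 ≤ F (2 * x) := by
        rcases eq_or_lt_of_le h2x with h' | h'
        · rw [h']
        · exact le_of_lt (Fmono (by norm_num) (by simpa using hx) h')
      have hgt := Fgt
      simp only [hF] at hle h1
      norm_num at hle h1 hgt
      linarith
  refine ⟨?_, hbounds⟩
  have hc : ContinuousOn F (Set.Icc (3.59 : ℝ) 3.592) := by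
    apply ContinuousOn.sub
    · exact Real.continuousOn_log.mono (by intro y hy; simp at hy ⊢; nlinarith [hy.1])
    · apply ContinuousOn.div continuousOn_const continuousOn_id
      intro y hy; simp at hy ⊢; nlinarith [hy.1]
  have hiv := intermediate_value_Ioo (by norm_num : (3.59 : ℝ) ≤ 3.592) hc
  have h1 : (1 : ℝ) ∈ Set.Ioo (F 3.59) (F 3.592) := ⟨Flt, Fgt⟩
  obtain ⟨y, hy, hFy⟩ := hiv h1
  have hypos : (0 : ℝ) < y := by have := hy.1; norm_num at this ⊢; linarith
  refine ⟨y / 2, ⟨by linarith, ?_⟩, ?_⟩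
  · rw [root_iff (by linarith)]
    have : 2 * (y / 2) = y := by ring
    rw [this]; exact hFy
  · rintro z ⟨hz, hzroot⟩
    have h1 : F (2 * z) = 1 := (root_iff hz).mp hzroot
    have h2 : F (2 * (y / 2)) = 1 := by
      have : 2 * (y / 2) = y := by ring
      rw [this]; exact hFy
    have := Fmono.injOn (by simpa using hz) (by simp; linarith) (h1.trans h2.symm)
    linarith
end

section
/- Let A ⊆ ℝ^n be a convex, centrally symmetric set and t ≥ 1. Then ℝ^n \ A contains the Minkowski sum (2/(t+1))·(ℝ^n \ tA) + ((t−1)/(t+1))·A. -/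
open Pointwise
theorem borell_inclusion (n : ℕ) (A : Set (EuclideanSpace ℝ (Fin n)))
    (hAconv : Convex ℝ A) (hAsymm : A = -A) (t : ℝ) (ht : 1 ≤ t) :
    (2 / (t + 1)) • (t • A)ᶜ + ((t - 1) / (t + 1)) • A ⊆ Aᶜ := by
  rintro x ⟨u, ⟨b, hb, rfl⟩, v, ⟨a, ha, rfl⟩, rfl⟩
  intro hx
  apply hb
  have ht0 : (0:ℝ) < t := lt_of_lt_of_le one_pos ht
  have ht1 : (0:ℝ) < t + 1 := by linarith
  have hna : -a ∈ A := by rw [hAsymm]; exact Set.neg_mem_neg.mpr ha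
  have hc : ((t+1)/(2*t)) • ((2/(t+1)) • b + ((t-1)/(t+1)) • a) + ((t-1)/(2*t)) • (-a) ∈ A := by
    apply hAconv hx hna (by positivity) (div_nonneg (by linarith) (by linarith))
    field_simp
    ring
  refine ⟨_, hc, ?_⟩
  match_scalars <;> field_simp <;> ring
end

section
/- Let K ⊆ ℝ^n be an isotropic convex body with isotropic constant L_K, and let x ∈ ℝ^n satisfy ‖x‖ ≥ 4L_K. Then vol(K ∩ (K + x)) ≤ 3^{−‖x‖/(8L_K)}. -/
open MeasureTheory RealInnerProductSpace
open Set Pointwise ENNReal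
open scoped NNReal

/-!
Write `t = ‖x‖`, `θ = t⁻¹ • x` and `c = 4 L / t ∈ (0, 1]`. By convexity,
`c • (K ∩ (K + x)) + (1 - c) • K ⊆ K ∩ (K + c • x)`, so the multiplicative Brunn–Minkowski
inequality gives `vol (K ∩ (K + x)) ^ c ≤ vol (K ∩ (K + c • x))`. As `⟪c • x, θ⟫ = 4 L`, each point
`y` of `K ∩ (K + c • x)` has `|⟪y, θ⟫| ≥ 2 L` or `|⟪y - c • x, θ⟫| ≥ 2 L`; by Chebyshev's inequality
and isotropy the points of `K` with `|⟪y, θ⟫| ≥ 2 L` have volume at most `1 / 4`. Hence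
`vol (K ∩ (K + c • x)) ≤ 1 / 2` and `vol (K ∩ (K + x)) ≤ 2 ^ (-t / (4 L)) ≤ 3 ^ (-t / (8 L))`.

Brunn–Minkowski is the Prékopa–Leindler inequality for indicator functions. On the line,
Prékopa–Leindler follows by integrating the one-dimensional Brunn–Minkowski inequality over the
superlevel sets of the functions normalised by their suprema; it passes to `ℝⁿ` by induction on
the dimension, applying the one-dimensional case to the marginals.
-/

theorem volume_add_volume_le_volume_add {A B : Set ℝ} (hA : IsCompact A) (hB : IsCompact B)
    (hA' : A.Nonempty) (hB' : B.Nonempty) :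
    volume A + volume B ≤ volume (A + B) := by
  obtain ⟨a, haA, ha⟩ := hA.exists_isGreatest hA'
  obtain ⟨b, hbB, hb⟩ := hB.exists_isLeast hB'
  have hdisj : (· + b) '' A ∩ (a + ·) '' B ⊆ {a + b} := by
    rintro _ ⟨⟨x, hx, rfl⟩, y, hy, hxy⟩
    have := ha hx
    have := hb hy
    simp only at hxy
    exact le_antisymm (by linarith) (by linarith)
  calc volume A + volume B = volume ((· + b) '' A) + volume ((a + ·) '' B) := by
        simp [image_add_right, image_add_left, measure_preimage_add_right, measure_preimage_add]
    _ = volume ((· + b) '' A ∪ (a + ·) '' B) := by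
        rw [← measure_union_add_inter' (hA.image (continuous_add_const b)).measurableSet,
          measure_mono_null hdisj (measure_singleton _), add_zero]
    _ ≤ volume (A + B) := by
        refine measure_mono (union_subset ?_ ?_)
        · rintro _ ⟨x, hx, rfl⟩; exact add_mem_add hx hbB
        · rintro _ ⟨y, hy, rfl⟩; exact add_mem_add haA hy

theorem ofReal_mul_volume_add_ofReal_mul_volume_le {a b : ℝ} (ha : 0 ≤ a) (hb : 0 ≤ b)
    {A B D : Set ℝ} (hA : MeasurableSet A) (hB : MeasurableSet B) (hA' : A.Nonempty)
    (hB' : B.Nonempty) (hD : ∀ x ∈ A, ∀ y ∈ B, a * x + b * y ∈ D) :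
    ENNReal.ofReal a * volume A + ENNReal.ofReal b * volume B ≤ volume D := by
  obtain ⟨x₀, hx₀⟩ := hA'
  obtain ⟨y₀, hy₀⟩ := hB'
  have hcompact : ∀ K₁ ⊆ A, IsCompact K₁ → ∀ K₂ ⊆ B, IsCompact K₂ →
      ENNReal.ofReal a * volume K₁ + ENNReal.ofReal b * volume K₂ ≤ volume D := by
    intro K₁ hK₁A hK₁ K₂ hK₂B hK₂
    -- adding a point makes the compact sets nonempty without decreasing their volume
    set K₁' := insert x₀ K₁
    set K₂' := insert y₀ K₂
    calc ENNReal.ofReal a * volume K₁ + ENNReal.ofReal b * volume K₂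
        ≤ volume (a • K₁') + volume (b • K₂') := by
          simp only [Measure.addHaar_smul, Module.finrank_self, pow_one, abs_of_nonneg ha,
            abs_of_nonneg hb]
          gcongr <;> exact subset_insert _ _
      _ ≤ volume (a • K₁' + b • K₂') :=
          volume_add_volume_le_volume_add ((hK₁.insert x₀).smul a) ((hK₂.insert y₀).smul b)
            ((insert_nonempty _ _).smul_set) ((insert_nonempty _ _).smul_set)
      _ ≤ volume D := by
          refine measure_mono ?_
          rintro _ ⟨_, ⟨x, hx, rfl⟩, _, ⟨y, hy, rfl⟩, rfl⟩
          exact hD x (insert_subset hx₀ hK₁A hx) y (insert_subset hy₀ hK₂B hy)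
  rw [hA.measure_eq_iSup_isCompact, hB.measure_eq_iSup_isCompact]
  simp only [ENNReal.mul_iSup, iSup_and']
  exact ENNReal.biSup_add_biSup_le' ⟨∅, empty_subset _, isCompact_empty⟩
    ⟨∅, empty_subset _, isCompact_empty⟩ fun K₁ h₁ K₂ h₂ => hcompact K₁ h₁.1 h₁.2 K₂ h₂.1 h₂.2

theorem volume_Ioo_inter_ofReal_mul_lt {S c : ℝ≥0∞} (hS : S ≠ 0) (hS' : S ≠ ⊤) :
    volume ({s : ℝ | ENNReal.ofReal s * S < c} ∩ Ioo 0 1) = min (c / S) 1 := by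
  have hr : min (c / S) 1 ≠ ⊤ := (min_le_right _ _).trans_lt one_lt_top |>.ne
  suffices {s : ℝ | ENNReal.ofReal s * S < c} ∩ Ioo 0 1 = Ioo 0 (min (c / S) 1).toReal by
    rw [this, Real.volume_Ioo, sub_zero, ENNReal.ofReal_toReal hr]
  ext s
  simp only [mem_inter_iff, mem_ofPred_eq, mem_Ioo, and_comm (a := 0 < s), ← and_assoc]
  refine and_congr_left fun hs => ?_
  rw [← ENNReal.ofReal_lt_iff_lt_toReal hs.le hr, lt_min_iff,
    ENNReal.lt_div_iff_mul_lt (Or.inl hS) (Or.inl hS'), ENNReal.ofReal_lt_one]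

theorem setLIntegral_Ioo_measure_ofReal_mul_lt {α : Type*} [MeasurableSpace α] (μ : Measure α)
    [SFinite μ] {f : α → ℝ≥0∞} (hf : Measurable f) {S : ℝ≥0∞} (hS : S ≠ 0) (hS' : S ≠ ⊤) :
    ∫⁻ s in Ioo 0 1, μ {x | ENNReal.ofReal s * S < f x} = ∫⁻ x, min (f x / S) 1 ∂μ := by
  have hE : MeasurableSet {p : ℝ × α | ENNReal.ofReal p.1 * S < f p.2} :=
    measurableSet_lt (by fun_prop) (hf.comp measurable_snd)
  calc ∫⁻ s in Ioo 0 1, μ {x | ENNReal.ofReal s * S < f x}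
      = (volume.restrict (Ioo (0 : ℝ) 1)).prod μ {p | ENNReal.ofReal p.1 * S < f p.2} :=
        (Measure.prod_apply hE).symm
    _ = ∫⁻ x, volume.restrict (Ioo (0 : ℝ) 1) {s | ENNReal.ofReal s * S < f x} ∂μ :=
        Measure.prod_apply_symm hE
    _ = ∫⁻ x, min (f x / S) 1 ∂μ := by
        refine lintegral_congr fun x => ?_
        rw [Measure.restrict_apply (measurableSet_lt (by fun_prop) measurable_const),
          volume_Ioo_inter_ofReal_mul_lt hS hS']

theorem setLIntegral_Ioo_measure_ofReal_mul_lt_of_le {α : Type*} [MeasurableSpace α]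
    (μ : Measure α) [SFinite μ] {f : α → ℝ≥0∞} (hf : Measurable f) {S : ℝ≥0∞} (hS : S ≠ 0)
    (hS' : S ≠ ⊤) (hfS : ∀ x, f x ≤ S) :
    ∫⁻ s in Ioo 0 1, μ {x | ENNReal.ofReal s * S < f x} = (∫⁻ x, f x ∂μ) / S := by
  rw [setLIntegral_Ioo_measure_ofReal_mul_lt _ hf hS hS', div_eq_mul_inv,
    ← lintegral_mul_const' _ _ (ENNReal.inv_ne_top.2 hS)]
  refine lintegral_congr fun x => ?_
  rw [min_eq_left ((ENNReal.div_le_iff hS hS').2 (by simpa using hfS x)), div_eq_mul_inv]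

theorem ENNReal.geom_mean_le_arith_mean2_weighted {l : ℝ} (hl0 : 0 < l) (hl1 : l < 1) (a b : ℝ≥0∞) :
    a ^ l * b ^ (1 - l) ≤ ENNReal.ofReal l * a + ENNReal.ofReal (1 - l) * b := by
  have hl1' : 0 < 1 - l := sub_pos.2 hl1
  rcases eq_or_ne a ⊤ with rfl | ha
  · simp [ENNReal.mul_top, hl0]
  rcases eq_or_ne b ⊤ with rfl | hb
  · rw [ENNReal.mul_top (by simpa using hl1'), add_top]; exact le_top
  lift a to ℝ≥0 using ha
  lift b to ℝ≥0 using hb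
  have := NNReal.geom_mean_le_arith_mean2_weighted l.toNNReal (1 - l).toNNReal a b
    (by rw [← Real.toNNReal_add hl0.le hl1'.le]; simp)
  rw [Real.coe_toNNReal _ hl0.le, Real.coe_toNNReal _ hl1'.le] at this
  rw [← ENNReal.coe_rpow_of_nonneg _ hl0.le, ← ENNReal.coe_rpow_of_nonneg _ hl1'.le]
  exact ENNReal.coe_le_coe.2 this |>.trans_eq (by simp [ENNReal.ofReal])

theorem ofReal_mul_volume_superlevel_add_le {l : ℝ} (hl0 : 0 < l) (hl1 : l < 1)
    {f g h : ℝ → ℝ≥0∞} (hf : Measurable f) (hg : Measurable g)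
    (hfgh : ∀ x y, f x ^ l * g y ^ (1 - l) ≤ h (l * x + (1 - l) * y))
    {a b : ℝ≥0∞} (ha : a < ⨆ x, f x) (hb : b < ⨆ x, g x) :
    ENNReal.ofReal l * volume {x | a < f x} + ENNReal.ofReal (1 - l) * volume {y | b < g y}
      ≤ volume {z | a ^ l * b ^ (1 - l) < h z} := by
  have hl1' : 0 < 1 - l := sub_pos.2 hl1
  refine ofReal_mul_volume_add_ofReal_mul_volume_le hl0.le hl1'.le
    (measurableSet_lt measurable_const hf) (measurableSet_lt measurable_const hg)
    (lt_iSup_iff.1 ha) (lt_iSup_iff.1 hb) fun x hx y hy => ?_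
  exact (ENNReal.mul_lt_mul (rpow_lt_rpow hx hl0) (rpow_lt_rpow hy hl1')).trans_le (hfgh x y)

theorem ofReal_mul_lintegral_div_iSup_add_le {l : ℝ} (hl0 : 0 < l) (hl1 : l < 1)
    {f g h : ℝ → ℝ≥0∞} (hf : Measurable f) (hg : Measurable g) (hh : Measurable h)
    (hfgh : ∀ x y, f x ^ l * g y ^ (1 - l) ≤ h (l * x + (1 - l) * y))
    (hSf0 : ⨆ x, f x ≠ 0) (hSfT : ⨆ x, f x ≠ ⊤) (hSg0 : ⨆ x, g x ≠ 0) (hSgT : ⨆ x, g x ≠ ⊤) :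
    ENNReal.ofReal l * ((∫⁻ x, f x) / ⨆ x, f x)
        + ENNReal.ofReal (1 - l) * ((∫⁻ x, g x) / ⨆ x, g x)
      ≤ (∫⁻ x, h x) / ((⨆ x, f x) ^ l * (⨆ x, g x) ^ (1 - l)) := by
  have hl1' : 0 < 1 - l := sub_pos.2 hl1
  set Sf := ⨆ x, f x
  set Sg := ⨆ x, g x
  set T := Sf ^ l * Sg ^ (1 - l)
  have hT0 : T ≠ 0 := mul_ne_zero (rpow_pos (pos_iff_ne_zero.2 hSf0) hSfT).ne'
    (rpow_pos (pos_iff_ne_zero.2 hSg0) hSgT).ne'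
  have hTT : T ≠ ⊤ := mul_ne_top (rpow_ne_top_of_nonneg hl0.le hSfT)
    (rpow_ne_top_of_nonneg hl1'.le hSgT)
  have hlevel : ∀ s ∈ Ioo (0 : ℝ) 1,
      ENNReal.ofReal l * volume {x | ENNReal.ofReal s * Sf < f x}
        + ENNReal.ofReal (1 - l) * volume {y | ENNReal.ofReal s * Sg < g y}
      ≤ volume {z | ENNReal.ofReal s * T < h z} := by
    rintro s ⟨hs0, hs1⟩
    have hs : ∀ {S : ℝ≥0∞}, S ≠ 0 → S ≠ ⊤ → ENNReal.ofReal s * S < S := fun h0 hT =>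
      ((ENNReal.mul_lt_mul_iff_left h0 hT).2 (ofReal_lt_one.2 hs1)).trans_eq (one_mul _)
    have hT : ENNReal.ofReal s * T
        = (ENNReal.ofReal s * Sf) ^ l * (ENNReal.ofReal s * Sg) ^ (1 - l) := by
      rw [mul_rpow_of_nonneg _ _ hl0.le, mul_rpow_of_nonneg _ _ hl1'.le, mul_mul_mul_comm,
        ← rpow_add _ _ (by simpa using hs0) ofReal_ne_top, add_sub_cancel, rpow_one]
    rw [hT]
    exact ofReal_mul_volume_superlevel_add_le hl0 hl1 hf hg hfgh (hs hSf0 hSfT) (hs hSg0 hSgT)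
  calc _ = (∫⁻ s in Ioo 0 1, ENNReal.ofReal l * volume {x | ENNReal.ofReal s * Sf < f x}) +
        ∫⁻ s in Ioo 0 1, ENNReal.ofReal (1 - l) * volume {y | ENNReal.ofReal s * Sg < g y} := by
        rw [lintegral_const_mul' _ _ ofReal_ne_top, lintegral_const_mul' _ _ ofReal_ne_top,
          setLIntegral_Ioo_measure_ofReal_mul_lt_of_le _ hf hSf0 hSfT (le_iSup f),
          setLIntegral_Ioo_measure_ofReal_mul_lt_of_le _ hg hSg0 hSgT (le_iSup g)]
    _ ≤ ∫⁻ s in Ioo 0 1, volume {z | ENNReal.ofReal s * T < h z} :=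
        (le_lintegral_add _ _).trans (setLIntegral_mono' measurableSet_Ioo hlevel)
    _ = ∫⁻ z, min (h z / T) 1 := setLIntegral_Ioo_measure_ofReal_mul_lt _ hh hT0 hTT
    _ ≤ ∫⁻ z, h z * T⁻¹ := lintegral_mono fun z => min_le_left _ _
    _ = (∫⁻ z, h z) / T := lintegral_mul_const' _ _ (ENNReal.inv_ne_top.2 hT0)

theorem lintegral_prekopaLeindler_real_of_bounded {l : ℝ} (hl0 : 0 < l) (hl1 : l < 1)
    {f g h : ℝ → ℝ≥0∞} (hf : Measurable f) (hg : Measurable g) (hh : Measurable h)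
    {M : ℝ≥0∞} (hM : M ≠ ⊤) (hfM : ∀ x, f x ≤ M) (hgM : ∀ x, g x ≤ M)
    (hfgh : ∀ x y, f x ^ l * g y ^ (1 - l) ≤ h (l * x + (1 - l) * y)) :
    (∫⁻ x, f x) ^ l * (∫⁻ x, g x) ^ (1 - l) ≤ ∫⁻ x, h x := by
  have hl1' : 0 < 1 - l := sub_pos.2 hl1
  set Sf := ⨆ x, f x
  set Sg := ⨆ x, g x
  rcases eq_or_ne Sf 0 with hSf0 | hSf0
  · simp [ENNReal.iSup_eq_zero.1 hSf0, zero_rpow_of_pos hl0]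
  rcases eq_or_ne Sg 0 with hSg0 | hSg0
  · simp [ENNReal.iSup_eq_zero.1 hSg0, zero_rpow_of_pos hl1']
  have hSfT : Sf ≠ ⊤ := ne_top_of_le_ne_top hM (iSup_le hfM)
  have hSgT : Sg ≠ ⊤ := ne_top_of_le_ne_top hM (iSup_le hgM)
  set T := Sf ^ l * Sg ^ (1 - l)
  have hT0 : T ≠ 0 := mul_ne_zero (rpow_pos (pos_iff_ne_zero.2 hSf0) hSfT).ne'
    (rpow_pos (pos_iff_ne_zero.2 hSg0) hSgT).ne'
  have hTT : T ≠ ⊤ := mul_ne_top (rpow_ne_top_of_nonneg hl0.le hSfT)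
    (rpow_ne_top_of_nonneg hl1'.le hSgT)
  calc (∫⁻ x, f x) ^ l * (∫⁻ x, g x) ^ (1 - l)
      = (Sf * ((∫⁻ x, f x) / Sf)) ^ l * (Sg * ((∫⁻ x, g x) / Sg)) ^ (1 - l) := by
        rw [ENNReal.mul_div_cancel hSf0 hSfT, ENNReal.mul_div_cancel hSg0 hSgT]
    _ = T * (((∫⁻ x, f x) / Sf) ^ l * ((∫⁻ x, g x) / Sg) ^ (1 - l)) := by
        rw [mul_rpow_of_nonneg _ _ hl0.le, mul_rpow_of_nonneg _ _ hl1'.le]; ring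
    _ ≤ T * ((∫⁻ x, h x) / T) := by
        gcongr
        exact (geom_mean_le_arith_mean2_weighted hl0 hl1 _ _).trans
          (ofReal_mul_lintegral_div_iSup_add_le hl0 hl1 hf hg hh hfgh hSf0 hSfT hSg0 hSgT)
    _ = ∫⁻ x, h x := ENNReal.mul_div_cancel hT0 hTT

theorem ENNReal.iSup_rpow_mul_iSup_rpow_le {ι : Type*} [Preorder ι] [IsDirectedOrder ι]
    {a b : ι → ℝ≥0∞} (ha : Monotone a) (hb : Monotone b) {p q : ℝ} (hp : 0 < p) (hq : 0 < q)
    {c : ℝ≥0∞} (h : ∀ i, a i ^ p * b i ^ q ≤ c) : (⨆ i, a i) ^ p * (⨆ i, b i) ^ q ≤ c := by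
  have hpow : ∀ {r : ℝ} (hr : 0 < r) (u : ι → ℝ≥0∞), (⨆ i, u i) ^ r = ⨆ i, u i ^ r :=
    fun hr u => (orderIsoRpow _ hr).map_iSup u
  rw [hpow hp, hpow hq, ENNReal.iSup_mul]
  refine iSup_le fun i => ?_
  rw [ENNReal.mul_iSup]
  refine iSup_le fun j => ?_
  obtain ⟨k, hik, hjk⟩ := exists_ge_ge i j
  exact (mul_le_mul' (rpow_le_rpow (ha hik) hp.le) (rpow_le_rpow (hb hjk) hq.le)).trans (h k)

theorem lintegral_eq_iSup_lintegral_min_natCast {α : Type*} [MeasurableSpace α] (μ : Measure α)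
    {f : α → ℝ≥0∞} (hf : Measurable f) :
    ∫⁻ x, f x ∂μ = ⨆ N : ℕ, ∫⁻ x, min (f x) N ∂μ := by
  rw [← lintegral_iSup (fun N => hf.min measurable_const)
    fun _ _ hNM x => min_le_min_left _ (by exact_mod_cast hNM)]
  congr with x
  rw [← inf_iSup_eq, ENNReal.iSup_natCast, inf_top_eq]

theorem lintegral_prekopaLeindler_real {l : ℝ} (hl0 : 0 < l) (hl1 : l < 1)
    {f g h : ℝ → ℝ≥0∞} (hf : Measurable f) (hg : Measurable g) (hh : Measurable h)
    (hfgh : ∀ x y, f x ^ l * g y ^ (1 - l) ≤ h (l * x + (1 - l) * y)) :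
    (∫⁻ x, f x) ^ l * (∫⁻ x, g x) ^ (1 - l) ≤ ∫⁻ x, h x := by
  have hmono : ∀ u : ℝ → ℝ≥0∞, Monotone fun N : ℕ => ∫⁻ x, min (u x) N :=
    fun u _ _ hNM => lintegral_mono fun x => min_le_min_left _ (by exact_mod_cast hNM)
  rw [lintegral_eq_iSup_lintegral_min_natCast _ hf, lintegral_eq_iSup_lintegral_min_natCast _ hg]
  refine iSup_rpow_mul_iSup_rpow_le (hmono f) (hmono g) hl0 (sub_pos.2 hl1) fun N =>
    lintegral_prekopaLeindler_real_of_bounded hl0 hl1 (hf.min measurable_const)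
      (hg.min measurable_const) hh (natCast_ne_top N) (fun _ => min_le_right _ _)
      (fun _ => min_le_right _ _) fun x y => ?_
  calc min (f x) N ^ l * min (g y) N ^ (1 - l) ≤ f x ^ l * g y ^ (1 - l) := by
        gcongr <;> exact min_le_left _ _
    _ ≤ h (l * x + (1 - l) * y) := hfgh x y

theorem lintegral_fin_cons {n : ℕ} {u : (Fin (n + 1) → ℝ) → ℝ≥0∞} (hu : Measurable u) :
    ∫⁻ x, u x = ∫⁻ a, ∫⁻ w, u (Fin.cons a w) := by
  set e := (MeasurableEquiv.piFinSuccAbove (fun _ : Fin (n + 1) => ℝ) 0).symm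
  have he : MeasurePreserving e := (volume_preserving_piFinSuccAbove _ 0).symm
  rw [← he.lintegral_comp hu, Measure.volume_eq_prod,
    lintegral_prod (fun p => u (e p)) (hu.comp he.measurable).aemeasurable]
  simp [e, MeasurableEquiv.piFinSuccAbove_symm_apply, Fin.insertNthEquiv, Fin.insertNth_zero']

theorem lintegral_prekopaLeindler_pi {l : ℝ} (hl0 : 0 < l) (hl1 : l < 1) (n : ℕ)
    {f g h : (Fin n → ℝ) → ℝ≥0∞} (hf : Measurable f) (hg : Measurable g) (hh : Measurable h)
    (hfgh : ∀ x y, f x ^ l * g y ^ (1 - l) ≤ h (l • x + (1 - l) • y)) :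
    (∫⁻ x, f x) ^ l * (∫⁻ x, g x) ^ (1 - l) ≤ ∫⁻ x, h x := by
  induction n with
  | zero =>
    have hvol : volume (univ : Set (Fin 0 → ℝ)) = 1 := by simp [volume_pi]
    simp only [lintegral_unique, hvol, mul_one]
    convert hfgh default default
  | succ n ih =>
    have hcons : ∀ {u : (Fin (n + 1) → ℝ) → ℝ≥0∞}, Measurable u →
        Measurable fun p : ℝ × (Fin n → ℝ) => u (Fin.cons p.1 p.2) := fun hu => by fun_prop
    rw [lintegral_fin_cons hf, lintegral_fin_cons hg, lintegral_fin_cons hh]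
    refine lintegral_prekopaLeindler_real hl0 hl1 (hcons hf).lintegral_prod_right'
      (hcons hg).lintegral_prod_right' (hcons hh).lintegral_prod_right' fun a b => ?_
    refine ih (by fun_prop) (by fun_prop) (by fun_prop) fun w v => ?_
    have hcomb : l • (Fin.cons a w : Fin (n + 1) → ℝ) + (1 - l) • Fin.cons b v =
        Fin.cons (l * a + (1 - l) * b) (l • w + (1 - l) • v) := by
      ext i; refine Fin.cases ?_ (fun i => ?_) i <;> simp
    simpa [hcomb] using hfgh (Fin.cons a w) (Fin.cons b v)

theorem volume_rpow_mul_volume_rpow_le_pi {l : ℝ} (hl0 : 0 < l) (hl1 : l < 1) {n : ℕ}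
    {A B D : Set (Fin n → ℝ)} (hA : MeasurableSet A) (hB : MeasurableSet B)
    (hD : MeasurableSet D) (hABD : ∀ a ∈ A, ∀ b ∈ B, l • a + (1 - l) • b ∈ D) :
    volume A ^ l * volume B ^ (1 - l) ≤ volume D := by
  have := lintegral_prekopaLeindler_pi hl0 hl1 n (measurable_one.indicator hA)
    (measurable_one.indicator hB) (measurable_one.indicator hD) fun x y => ?_
  · simpa [lintegral_indicator_one, hA, hB, hD] using this
  by_cases hx : x ∈ A
  · by_cases hy : y ∈ B
    · simp [hx, hy, hABD x hx y hy]
    · simp [hy, zero_rpow_of_pos (sub_pos.2 hl1)]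
  · simp [hx, zero_rpow_of_pos hl0]

theorem EuclideanSpace.volume_rpow_mul_volume_rpow_le {l : ℝ} (hl0 : 0 < l) (hl1 : l < 1)
    {n : ℕ} {A B D : Set (EuclideanSpace ℝ (Fin n))} (hA : NullMeasurableSet A)
    (hB : NullMeasurableSet B) (hABD : ∀ a ∈ A, ∀ b ∈ B, l • a + (1 - l) • b ∈ D) :
    volume A ^ l * volume B ^ (1 - l) ≤ volume D := by
  obtain ⟨A', hA'A, hA'm, hA'⟩ := hA.exists_measurable_subset_ae_eq
  obtain ⟨B', hB'B, hB'm, hB'⟩ := hB.exists_measurable_subset_ae_eq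
  have he := PiLp.volume_preserving_toLp (Fin n)
  rw [← measure_congr hA', ← measure_congr hB', ← measure_toMeasurable D,
    ← he.measure_preimage hA'm.nullMeasurableSet, ← he.measure_preimage hB'm.nullMeasurableSet,
    ← he.measure_preimage (measurableSet_toMeasurable _ _).nullMeasurableSet]
  refine volume_rpow_mul_volume_rpow_le_pi hl0 hl1 (he.measurable hA'm) (he.measurable hB'm)
    (he.measurable (measurableSet_toMeasurable _ _)) fun a ha b hb => ?_
  refine subset_toMeasurable _ _ ?_
  simpa using hABD _ (hA'A ha) _ (hB'B hb)

theorem measure_le_le_ofReal_integral_div {α : Type*} [MeasurableSpace α] {μ : Measure α}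
    {f : α → ℝ} (hf0 : 0 ≤ᵐ[μ] f) (hf : Integrable f μ) {t : ℝ} (ht : 0 < t) :
    μ {x | t ≤ f x} ≤ ENNReal.ofReal ((∫ x, f x ∂μ) / t) := by
  calc μ {x | t ≤ f x} = μ {x | ENNReal.ofReal t ≤ ENNReal.ofReal (f x)} := by
        congr with x; exact (ENNReal.ofReal_le_ofReal_iff' |>.trans (or_iff_left ht.not_ge)).symm
    _ ≤ (∫⁻ x, ENNReal.ofReal (f x) ∂μ) / ENNReal.ofReal t :=
        meas_ge_le_lintegral_div hf.aemeasurable.ennreal_ofReal (by simpa using ht) ofReal_ne_top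
    _ = ENNReal.ofReal ((∫ x, f x ∂μ) / t) := by
        rw [← ofReal_integral_eq_lintegral_ofReal hf hf0, ENNReal.ofReal_div_of_pos ht]

theorem measure_inter_vadd_le_half {E : Type*} [NormedAddCommGroup E] [InnerProductSpace ℝ E]
    [MeasurableSpace E] {μ : Measure E} [μ.IsAddLeftInvariant] {K : Set E} {θ w : E} {L : ℝ}
    (hL : 0 < L) (hθ : ∫ y in K, ⟪y, θ⟫ ^ 2 ∂μ = L ^ 2) (hw : 4 * L ≤ ⟪w, θ⟫) :
    μ (K ∩ (w +ᵥ K)) ≤ ENNReal.ofReal (1 / 2) := by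
  set S := {y | (2 * L) ^ 2 ≤ ⟪y, θ⟫ ^ 2} ∩ K
  have hint : Integrable (fun y => ⟪y, θ⟫ ^ 2) (μ.restrict K) := by
    by_contra h
    rw [integral_undef h] at hθ
    exact (pow_pos hL 2).ne' hθ.symm
  have hS : μ S ≤ ENNReal.ofReal (1 / 4) := by
    calc μ S ≤ μ.restrict K {y | (2 * L) ^ 2 ≤ ⟪y, θ⟫ ^ 2} := Measure.le_restrict_apply _ _
      _ ≤ ENNReal.ofReal (L ^ 2 / (2 * L) ^ 2) := by
          simpa [hθ] using measure_le_le_ofReal_integral_div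
            (ae_of_all _ fun y => sq_nonneg ⟪y, θ⟫) hint (by positivity : 0 < (2 * L) ^ 2)
      _ = ENNReal.ofReal (1 / 4) := by congr 1; field_simp; ring
  -- a point of `K ∩ (w +ᵥ K)` far from the hyperplane `θ⊥` lies in `S`, one close to it in `w +ᵥ S`
  have hsub : K ∩ (w +ᵥ K) ⊆ S ∪ (w +ᵥ S) := by
    rintro y ⟨hyK, z, hzK, rfl⟩
    by_cases hz : (2 * L) ^ 2 ≤ ⟪w + z, θ⟫ ^ 2
    · exact Or.inl ⟨hz, hyK⟩
    · refine Or.inr ⟨z, ⟨?_, hzK⟩, rfl⟩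
      rw [inner_add_left, not_le] at hz
      have := (abs_lt.1 (abs_lt_of_sq_lt_sq hz (by positivity))).2
      show (2 * L) ^ 2 ≤ ⟪z, θ⟫ ^ 2
      nlinarith
  calc μ (K ∩ (w +ᵥ K)) ≤ μ S + μ (w +ᵥ S) := (measure_mono hsub).trans (measure_union_le _ _)
    _ ≤ ENNReal.ofReal (1 / 4) + ENNReal.ofReal (1 / 4) := by rw [measure_vadd]; gcongr
    _ = ENNReal.ofReal (1 / 2) := by rw [← ENNReal.ofReal_add] <;> norm_num

theorem Convex.volume_inter_vadd_rpow_mul_le {n : ℕ} {K : Set (EuclideanSpace ℝ (Fin n))}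
    (hK : Convex ℝ K) (x : EuclideanSpace ℝ (Fin n)) {c : ℝ} (hc0 : 0 < c) (hc1 : c ≤ 1) :
    volume (K ∩ (x +ᵥ K)) ^ c * volume K ^ (1 - c) ≤ volume (K ∩ (c • x +ᵥ K)) := by
  rcases hc1.lt_or_eq with hc1 | rfl
  · refine EuclideanSpace.volume_rpow_mul_volume_rpow_le hc0 hc1
      ((hK.inter (hK.vadd x)).nullMeasurableSet (μ := volume))
      (hK.nullMeasurableSet (μ := volume)) ?_
    rintro _ ⟨haK, b, hbK, rfl⟩ k hk
    refine ⟨hK haK hk hc0.le (sub_nonneg.2 hc1.le) (add_sub_cancel c 1),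
      c • b + (1 - c) • k, hK hbK hk hc0.le (sub_nonneg.2 hc1.le) (add_sub_cancel c 1), ?_⟩
    simp only [vadd_eq_add]
    module
  · simp

theorem one_half_rpow_two_mul_le_three_rpow_neg {s : ℝ} (hs : 0 ≤ s) :
    (1 / 2 : ℝ) ^ (2 * s) ≤ 3 ^ (-s) := by
  rw [Real.rpow_mul (by norm_num), Real.rpow_two, Real.rpow_neg (by norm_num),
    ← Real.inv_rpow (by norm_num)]
  exact Real.rpow_le_rpow (by norm_num) (by norm_num) hs

theorem isotropic_overlap_small_general (n : ℕ) (K : Set (EuclideanSpace ℝ (Fin n)))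
    (hKconv : Convex ℝ K)
    (hKvol : volume K = 1)
    (L : ℝ) (hL : 0 < L)
    (hKiso : ∀ z : EuclideanSpace ℝ (Fin n), ∫ y in K, (⟪y, z⟫) ^ 2 = L ^ 2 * ‖z‖ ^ 2)
    (x : EuclideanSpace ℝ (Fin n)) (hx : 4 * L ≤ ‖x‖) :
    (volume (K ∩ (fun y => y + x) '' K)).toReal ≤ (3 : ℝ) ^ (-(‖x‖ / (8 * L))) := by
  have ht : 0 < ‖x‖ := by linarith
  set θ := ‖x‖⁻¹ • x
  have hθ : ∫ y in K, ⟪y, θ⟫ ^ 2 = L ^ 2 := by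
    rw [hKiso, norm_smul, norm_inv, norm_norm, inv_mul_cancel₀ ht.ne', one_pow, mul_one]
  set c := 4 * L / ‖x‖
  have hc0 : 0 < c := by positivity
  have hcx : ⟪c • x, θ⟫ = 4 * L := by
    simp only [θ, c, real_inner_smul_left, real_inner_smul_right, real_inner_self_eq_norm_sq]
    field_simp
  have hhalf := (hKconv.volume_inter_vadd_rpow_mul_le x hc0 (div_le_one_of_le₀ hx ht.le)).trans
    (measure_inter_vadd_le_half hL hθ hcx.ge)
  rw [hKvol, one_rpow, mul_one] at hhalf
  have himage : (fun y => y + x) '' K = x +ᵥ K := by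
    simp only [← image_vadd, vadd_eq_add, add_comm]
  have hreal : (volume (K ∩ (x +ᵥ K))).toReal ^ c ≤ 1 / 2 := by
    rw [toReal_rpow]
    simpa using toReal_mono ofReal_ne_top hhalf
  rw [himage]
  calc (volume (K ∩ (x +ᵥ K))).toReal ≤ (1 / 2 : ℝ) ^ c⁻¹ :=
        (Real.le_rpow_inv_iff_of_pos toReal_nonneg (by norm_num) hc0).2 hreal
    _ = (1 / 2 : ℝ) ^ (2 * (‖x‖ / (8 * L))) := by congr 1; simp only [c]; field_simp; ring
    _ ≤ (3 : ℝ) ^ (-(‖x‖ / (8 * L))) := one_half_rpow_two_mul_le_three_rpow_neg (by positivity)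

theorem isotropic_overlap_small (n : ℕ) (K : Set (EuclideanSpace ℝ (Fin n)))
    (hKconv : Convex ℝ K) (hKcomp : IsCompact K) (hKint : (interior K).Nonempty)
    (hKvol : volume K = 1)
    (hKbary : ∫ y in K, y = (0 : EuclideanSpace ℝ (Fin n)))
    (L : ℝ) (hL : 0 < L)
    (hKiso : ∀ z : EuclideanSpace ℝ (Fin n), ∫ y in K, (⟪y, z⟫) ^ 2 = L ^ 2 * ‖z‖ ^ 2)
    (x : EuclideanSpace ℝ (Fin n)) (hx : 4 * L ≤ ‖x‖) :
    (volume (K ∩ (fun y => y + x) '' K)).toReal ≤ (3 : ℝ) ^ (-(‖x‖ / (8 * L))) :=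
  isotropic_overlap_small_general n K hKconv hKvol L hL hKiso x hx
end
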